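/- Every subgroup of G of index 4 (equivalently, of order 40) contains the element α⁴, hence contains the commutator subgroup [G,G] = ⟨α⁴⟩, and is therefore a normal subgroup of G. -/

import Mathlib

/-!
Two of the cosets `α⁰H, …, α⁴H` of a subgroup `H` of index 4 coincide, so `αᵐ ∈ H` for some
`1 ≤ m ≤ 4`; together with `α⁴⁰ = 1` this gives `α^gcd(m, 40) ∈ H`, and `gcd(m, 40) ∣ 4`.
Conjugation by `β` raises `α⁴` to its 13th power, so the finite cyclic group `⟨α⁴⟩` is normal,
and `⁅α, β⁆ = α⁻¹²` lies in it; hence `G ⧸ ⟨α⁴⟩` is generated by two commuting elements and is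
abelian. So `[G, G] ≤ ⟨α⁴⟩ ≤ H`, and a subgroup containing `[G, G]` is normal.
-/

open Subgroup

open scoped commutatorElement

section

variable {G : Type*} [Group G]

namespace Subgroup

theorem pow_gcd_mem {H : Subgroup G} {g : G} {m n : ℕ} (hm : g ^ m ∈ H) (hn : g ^ n ∈ H) :
    g ^ m.gcd n ∈ H := by
  rw [← zpow_natCast, Nat.gcd_eq_gcd_ab, zpow_add, zpow_mul, zpow_mul, zpow_natCast,
    zpow_natCast]
  exact H.mul_mem (H.zpow_mem hm _) (H.zpow_mem hn _)

theorem pow_mem_of_index_ne_zero_of_gcd_dvd {H : Subgroup G} (h : H.index ≠ 0) {g : G}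
    {n k : ℕ} (hg : g ^ n = 1) (hk : ∀ m, 0 < m → m ≤ H.index → m.gcd n ∣ k) : g ^ k ∈ H := by
  obtain ⟨m, hm_pos, hm_le, hm⟩ := exists_pow_mem_of_index_ne_zero h g
  obtain ⟨c, rfl⟩ := hk m hm_pos hm_le
  rw [pow_mul]
  exact H.pow_mem (pow_gcd_mem hm (hg ▸ H.one_mem)) c

theorem mem_normalizer_zpowers_of_conj_mem {g x : G} (hx : IsOfFinOrder x)
    (h : g * x * g⁻¹ ∈ zpowers x) : g ∈ normalizer (zpowers x : Set G) := by
  have : Finite (zpowers x) := hx.finite_zpowers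
  rw [mem_normalizer_iff_map_conj_eq, MonoidHom.map_zpowers]
  refine eq_of_le_of_card_ge (zpowers_le.mpr h) ?_
  rw [Nat.card_zpowers, Nat.card_zpowers, MonoidHom.coe_coe, MulEquiv.orderOf_eq]

end Subgroup

theorem isMulCommutative_of_closure_pair_eq_top {a b : G} (hgen : closure {a, b} = ⊤)
    (hab : Commute a b) : IsMulCommutative G := by
  have : IsMulCommutative (closure {a, b}) := isMulCommutative_closure <| by
    rintro x (rfl | rfl) y (rfl | rfl)
    exacts [rfl, hab.eq, hab.symm.eq, rfl]
  refine ⟨⟨fun x y => ?_⟩⟩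
  have hx : x ∈ closure {a, b} := hgen ▸ mem_top x
  have hy : y ∈ closure {a, b} := hgen ▸ mem_top y
  exact congrArg Subtype.val (mul_comm' (⟨x, hx⟩ : closure {a, b}) ⟨y, hy⟩)

theorem commutator_le_of_closure_pair_eq_top {N : Subgroup G} [N.Normal] {a b : G}
    (hgen : closure {a, b} = ⊤) (hab : ⁅a, b⁆ ∈ N) : commutator G ≤ N := by
  refine Normal.quotient_commutative_iff_commutator_le.mp
    (isMulCommutative_of_closure_pair_eq_top (a := (a : G ⧸ N)) (b := b) ?_ ?_)
  · rw [← QuotientGroup.mk'_apply, ← QuotientGroup.mk'_apply, ← Set.image_pair,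
      ← MonoidHom.map_closure, hgen, map_top_of_surjective _ (QuotientGroup.mk'_surjective N)]
  · rwa [commute_iff_eq, ← commutatorElement_eq_one_iff_mul_comm, ← QuotientGroup.mk'_apply,
      ← QuotientGroup.mk'_apply, ← map_commutatorElement, QuotientGroup.mk'_apply,
      QuotientGroup.eq_one_iff]

end

theorem subgroup_index_four_contains_commutator_and_normal_general
    (G : Type*) [Group G] (α β : G)
    (hgen : Subgroup.closure {α, β} = ⊤)
    (hα : α ^ 40 = 1)
    (hrel : β * α * β⁻¹ = α ^ 13) :
    ∀ H : Subgroup G, H.index = 4 →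
      α ^ 4 ∈ H ∧ commutator G ≤ H ∧ H.Normal := by
  have hfin : IsOfFinOrder (α ^ 4) :=
    isOfFinOrder_iff_pow_eq_one.mpr ⟨10, by norm_num, by rw [← pow_mul, hα]⟩
  have hnormal : (zpowers (α ^ 4)).Normal := by
    rw [← normalizer_eq_top_iff, eq_top_iff, ← hgen, closure_le]
    rintro x (rfl | rfl)
    · exact mem_normalizer_zpowers_of_conj_mem hfin ⟨1, by group⟩
    · exact mem_normalizer_zpowers_of_conj_mem hfin ⟨13, by rw [← conj_pow, hrel]; group⟩
  have hcomm : commutator G ≤ zpowers (α ^ 4) := by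
    refine commutator_le_of_closure_pair_eq_top hgen ⟨-3, ?_⟩
    calc (α ^ 4) ^ (-3 : ℤ) = α * (α ^ 13)⁻¹ := by group
      _ = ⁅α, β⁆ := by rw [← hrel]; group
  intro H hH
  have hα4 : α ^ 4 ∈ H := by
    refine pow_mem_of_index_ne_zero_of_gcd_dvd (by rw [hH]; norm_num) hα ?_
    rw [hH]
    intro m hm_pos hm_le
    interval_cases m <;> decide
  have hle : commutator G ≤ H := hcomm.trans (zpowers_le.mpr hα4)
  exact ⟨hα4, hle, .of_commutator_le _ hle⟩

/-- In the group `G = ⟨α, β ∣ α⁴⁰ = β⁴ = 1, βαβ⁻¹ = α¹³⟩` of order 160,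
every subgroup of index 4 (equivalently, of order 40) contains `α⁴`, hence contains the
commutator subgroup `[G,G] = ⟨α⁴⟩`, and is therefore normal in `G`. -/
theorem subgroup_index_four_contains_commutator_and_normal
    (G : Type*) [Group G] (α β : G)
    (hgen : Subgroup.closure {α, β} = ⊤)
    (hα : α ^ 40 = 1) (hβ : β ^ 4 = 1)
    (hrel : β * α * β⁻¹ = α ^ 13)
    (hcard : Nat.card G = 160) :
    ∀ H : Subgroup G, H.index = 4 →
      α ^ 4 ∈ H ∧ commutator G ≤ H ∧ H.Normal :=
  subgroup_index_four_contains_commutator_and_normal_general G α β hgen hα hrel
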